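/- arXiv:2502.17461 — 2 statements merged into one kernel-verified Lean document; each statement's English description precedes it below -/
import Mathlib

section
/- Let N be a WR0-realizable reaction network on n species, and for each choice of positive rate constants κ let (N_κ, k_κ) denote a WR0 realization of (N,κ). Then the linkage class partition of N_κ (the partition of the set of complexes of N_κ into the vertex sets of its connected components) is the same for every choice of rate constants κ of N. -/
/-!
Basic definitions for reaction networks, following the paper
"Weakly reversible deficiency zero realizations of reaction networks".
-/

noncomputable section

open Finset

/-- A complex (vertex of a Euclidean embedded graph) is a point of `ℝ^n`. -/
abbrev Cplx (n : ℕ) : Type := Fin n → ℝ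

/-- A reaction network on `n` species: a finite directed graph with vertices in `ℝ^n`,
given by its finite set of edges (reactions) `y → y'` with `y ≠ y'`.
Every vertex (complex) is incident to at least one edge, since the complexes are by
definition the endpoints of the edges. -/
structure ReactionNetwork (n : ℕ) where
  reactions : Finset (Cplx n × Cplx n)
  no_loops : ∀ r ∈ reactions, r.1 ≠ r.2

namespace ReactionNetwork

variable {n : ℕ}

/-- `κ` is a choice of positive rate constants for `N`. -/
def PosRates (N : ReactionNetwork n) (κ : Cplx n × Cplx n → ℝ) : Prop :=
  ∀ r ∈ N.reactions, 0 < κ r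

/-- The monomial `x^y = x₁^{y₁} ⋯ x_n^{y_n}`. -/
def monomial (x y : Cplx n) : ℝ := ∏ i, x i ^ y i

/-- The mass-action vector field `f_{(N,κ)}(x) = ∑_{y→y'∈N} κ_{y→y'} x^y (y'-y)`. -/
def massAction (N : ReactionNetwork n) (κ : Cplx n × Cplx n → ℝ) (x : Cplx n) : Cplx n :=
  ∑ r ∈ N.reactions, (κ r * monomial x r.1) • (r.2 - r.1)

/-- The source complexes of `N`. -/
def sources (N : ReactionNetwork n) : Finset (Cplx n) := N.reactions.image Prod.fst

/-- The complexes (vertices) of `N`. -/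
def complexes (N : ReactionNetwork n) : Finset (Cplx n) :=
  N.reactions.image Prod.fst ∪ N.reactions.image Prod.snd

/-- Undirected connectivity between complexes of `N`. -/
def linked (N : ReactionNetwork n) : Cplx n → Cplx n → Prop :=
  Relation.ReflTransGen (fun u v => (u, v) ∈ N.reactions ∨ (v, u) ∈ N.reactions)

/-- The linkage class (connected component) of the complex `y`. -/
def linkageClass (N : ReactionNetwork n) (y : Cplx n) : Set (Cplx n) :=
  {z | z ∈ N.complexes ∧ N.linked y z}

/-- The linkage class partition of `N`: the partition of its complexes into the
vertex sets of its connected components. -/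
def linkagePartition (N : ReactionNetwork n) : Set (Set (Cplx n)) :=
  {C | ∃ y ∈ N.complexes, C = N.linkageClass y}

/-- The number of linkage classes of `N`. -/
def numLinkageClasses (N : ReactionNetwork n) : ℕ :=
  N.linkagePartition.ncard

/-- The stoichiometric subspace `S_N = span{y' - y | y → y' ∈ N}`. -/
def stoichSubspace (N : ReactionNetwork n) : Submodule ℝ (Cplx n) :=
  Submodule.span ℝ {d | ∃ r ∈ N.reactions, d = r.2 - r.1}

/-- `N` is weakly reversible: every connected component is strongly connected,
i.e. every reaction is part of a directed cycle. -/
def WeaklyReversible (N : ReactionNetwork n) : Prop :=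
  ∀ r ∈ N.reactions,
    Relation.ReflTransGen (fun u v => (u, v) ∈ N.reactions) r.2 r.1

/-- `N` has deficiency zero: `|V| - l - dim S_N = 0`. -/
def DeficiencyZero (N : ReactionNetwork n) : Prop :=
  N.complexes.card = N.numLinkageClasses + Module.finrank ℝ N.stoichSubspace

/-- `N` is a WR₀ network: weakly reversible and of deficiency zero. -/
def WR0 (N : ReactionNetwork n) : Prop := N.WeaklyReversible ∧ N.DeficiencyZero

/-- `(N',κ')` is a realization of `(N,κ)`: the two mass-action systems generate the
same ODE system on the positive orthant. -/
def IsRealizationOf (N' : ReactionNetwork n) (κ' : Cplx n × Cplx n → ℝ)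
    (N : ReactionNetwork n) (κ : Cplx n × Cplx n → ℝ) : Prop :=
  ∀ x : Cplx n, (∀ i, 0 < x i) → N'.massAction κ' x = N.massAction κ x

/-- `N` is realizable by `N'`: for every choice of positive rate constants `κ` for `N`
there exist positive rate constants `κ'` for `N'` generating the same ODE system. -/
def RealizableBy (N N' : ReactionNetwork n) : Prop :=
  ∀ κ : Cplx n × Cplx n → ℝ, N.PosRates κ →
    ∃ κ' : Cplx n × Cplx n → ℝ, N'.PosRates κ' ∧ IsRealizationOf N' κ' N κ

/-- `N` is WR₀-realizable: for every choice of positive rate constants `κ`,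
the mass-action system `(N,κ)` has a WR₀ realization. -/
def WR0Realizable (N : ReactionNetwork n) : Prop :=
  ∀ κ : Cplx n × Cplx n → ℝ, N.PosRates κ →
    ∃ (N' : ReactionNetwork n) (κ' : Cplx n × Cplx n → ℝ),
      N'.WR0 ∧ N'.PosRates κ' ∧ IsRealizationOf N' κ' N κ

/-- The reactions of `N` with source complex `y`. -/
def reactionsFrom (N : ReactionNetwork n) (y : Cplx n) : Finset (Cplx n × Cplx n) :=
  N.reactions.filter (fun r => r.1 = y)

/-- `Cone_N(y)`: the cone of nonnegative combinations of the reaction vectors of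
reactions of `N` with source `y`. -/
def reactionCone (N : ReactionNetwork n) (y : Cplx n) : Set (Cplx n) :=
  {w | ∃ α : Cplx n × Cplx n → ℝ, (∀ r ∈ N.reactionsFrom y, 0 ≤ α r) ∧
        w = ∑ r ∈ N.reactionsFrom y, α r • (r.2 - r.1)}

/-- The net reaction vector `w_y = ∑_{y→y'∈N} κ_{y→y'} (y' - y)` of a source complex. -/
def netVector (N : ReactionNetwork n) (κ : Cplx n × Cplx n → ℝ) (y : Cplx n) : Cplx n :=
  ∑ r ∈ N.reactionsFrom y, κ r • (r.2 - r.1)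

end ReactionNetwork
section Aux
namespace ReactionNetwork
variable {n : ℕ}

attribute [local instance] Classical.propDecidable

lemma linked_refl (N : ReactionNetwork n) (y : Cplx n) : N.linked y y :=
  Relation.ReflTransGen.refl

lemma linked_symm {N : ReactionNetwork n} {y z : Cplx n} (h : N.linked y z) : N.linked z y :=
  by
    unfold linked at h ⊢
    haveI : Std.Symm (fun u v : Cplx n => (u, v) ∈ N.reactions ∨ (v, u) ∈ N.reactions) :=
      ⟨fun _ _ hh => Or.symm hh⟩
    exact Std.Symm.symm _ _ h

lemma linked_trans {N : ReactionNetwork n} {x y z : Cplx n} (h : N.linked x y)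
    (h' : N.linked y z) : N.linked x z := Relation.ReflTransGen.trans h h'

lemma linked_of_mem {N : ReactionNetwork n} {r : Cplx n × Cplx n} (h : r ∈ N.reactions) :
    N.linked r.1 r.2 :=
  Relation.ReflTransGen.single (Or.inl (by simpa using h))

lemma fst_mem_complexes {N : ReactionNetwork n} {r : Cplx n × Cplx n} (h : r ∈ N.reactions) :
    r.1 ∈ N.complexes :=
  Finset.mem_union_left _ (Finset.mem_image_of_mem _ h)

lemma snd_mem_complexes {N : ReactionNetwork n} {r : Cplx n × Cplx n} (h : r ∈ N.reactions) :
    r.2 ∈ N.complexes :=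
  Finset.mem_union_right _ (Finset.mem_image_of_mem _ h)

/-- The linkage class of `y` as a `Finset`. -/
noncomputable def classF (N : ReactionNetwork n) (y : Cplx n) : Finset (Cplx n) :=
  N.complexes.filter (fun z => N.linked y z)

lemma mem_classF {N : ReactionNetwork n} {y z : Cplx n} :
    z ∈ N.classF y ↔ z ∈ N.complexes ∧ N.linked y z := Finset.mem_filter

lemma classF_subset (N : ReactionNetwork n) (y : Cplx n) : N.classF y ⊆ N.complexes :=
  Finset.filter_subset _ _

lemma self_mem_classF {N : ReactionNetwork n} {y : Cplx n} (h : y ∈ N.complexes) :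
    y ∈ N.classF y := mem_classF.2 ⟨h, N.linked_refl y⟩

lemma classF_eq_of_linked {N : ReactionNetwork n} {y z : Cplx n} (h : N.linked y z) :
    N.classF y = N.classF z := by
  ext v
  simp only [mem_classF]
  exact ⟨fun ⟨hv, hl⟩ => ⟨hv, linked_trans (linked_symm h) hl⟩,
    fun ⟨hv, hl⟩ => ⟨hv, linked_trans h hl⟩⟩

lemma classF_eq_of_mem {N : ReactionNetwork n} {y z : Cplx n} (h : z ∈ N.classF y) :
    N.classF z = N.classF y := (classF_eq_of_linked (mem_classF.1 h).2).symm

lemma coe_classF (N : ReactionNetwork n) (y : Cplx n) :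
    (↑(N.classF y) : Set (Cplx n)) = N.linkageClass y := by
  ext z; simp [classF, linkageClass, mem_classF]

lemma target_mem_classF {N : ReactionNetwork n} {y : Cplx n} {r : Cplx n × Cplx n}
    (hr : r ∈ N.reactions) (h : r.1 ∈ N.classF y) : r.2 ∈ N.classF y :=
  mem_classF.2 ⟨snd_mem_complexes hr, linked_trans (mem_classF.1 h).2 (linked_of_mem hr)⟩

lemma source_mem_classF {N : ReactionNetwork n} {y : Cplx n} {r : Cplx n × Cplx n}
    (hr : r ∈ N.reactions) (h : r.2 ∈ N.classF y) : r.1 ∈ N.classF y :=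
  mem_classF.2 ⟨fst_mem_complexes hr,
    linked_trans (mem_classF.1 h).2 (linked_symm (linked_of_mem hr))⟩

lemma dirPath_of_linked {N : ReactionNetwork n} (hwr : N.WeaklyReversible) {y z : Cplx n}
    (h : N.linked y z) : Relation.ReflTransGen (fun u v => (u, v) ∈ N.reactions) y z := by
  induction h with
  | refl => exact Relation.ReflTransGen.refl
  | tail hab step ih =>
    rcases step with hs | hs
    · exact ih.tail hs
    · exact ih.trans (hwr _ hs)

lemma exists_reaction_from {N : ReactionNetwork n} (hwr : N.WeaklyReversible) {y : Cplx n}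
    (hy : y ∈ N.complexes) : ∃ r ∈ N.reactions, r.1 = y := by
  rcases Finset.mem_union.1 hy with hy | hy
  · rcases Finset.mem_image.1 hy with ⟨r, hr, rfl⟩
    exact ⟨r, hr, rfl⟩
  · rcases Finset.mem_image.1 hy with ⟨r, hr, rfl⟩
    rcases (hwr r hr).cases_head with heq | ⟨c, hc, _⟩
    · exact absurd heq.symm (N.no_loops r hr)
    · exact ⟨(r.2, c), hc, rfl⟩

end ReactionNetwork
end Aux
section Aux2
namespace ReactionNetwork
variable {n : ℕ}

attribute [local instance] Classical.propDecidable

lemma reactionsFrom_eq_empty {N : ReactionNetwork n} {y : Cplx n} (h : y ∉ N.sources) :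
    N.reactionsFrom y = ∅ := by
  rw [Finset.eq_empty_iff_forall_notMem]
  intro r hr
  rcases Finset.mem_filter.1 hr with ⟨hr1, hr2⟩
  exact h (Finset.mem_image.2 ⟨r, hr1, hr2⟩)

lemma netVector_eq_zero {N : ReactionNetwork n} {κ : Cplx n × Cplx n → ℝ} {y : Cplx n}
    (h : y ∉ N.sources) : N.netVector κ y = 0 := by
  rw [netVector, reactionsFrom_eq_empty h, Finset.sum_empty]

lemma massAction_eq_sum {N : ReactionNetwork n} (κ : Cplx n × Cplx n → ℝ) (x : Cplx n)
    {F : Finset (Cplx n)} (hF : N.sources ⊆ F) :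
    N.massAction κ x = ∑ y ∈ F, monomial x y • N.netVector κ y := by
  have hmap : ∀ r ∈ N.reactions, r.1 ∈ F := fun r hr =>
    hF (Finset.mem_image.2 ⟨r, hr, rfl⟩)
  rw [massAction, ← Finset.sum_fiberwise_of_maps_to hmap
    (fun r => (κ r * monomial x r.1) • (r.2 - r.1))]
  refine Finset.sum_congr rfl fun y _ => ?_
  rw [netVector, reactionsFrom, Finset.smul_sum]
  refine Finset.sum_congr rfl fun r hr => ?_
  rcases Finset.mem_filter.1 hr with ⟨_, hr2⟩
  rw [hr2, smul_smul, mul_comm]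

/-- A linear functional separating finitely many nonzero vectors from 0. -/
lemma exists_sep_aux (D : Finset (Cplx n)) (hD : ∀ d ∈ D, d ≠ 0) :
    ∃ u : Fin n → ℝ, ∀ d ∈ D, (∑ i, u i * d i) ≠ 0 := by
  classical
  induction D using Finset.induction with
  | empty => exact ⟨0, by simp⟩
  | @insert d₀ D hd₀ ih =>
    obtain ⟨u, hu⟩ := ih (fun d hd => hD d (Finset.mem_insert_of_mem hd))
    have hd₀0 : d₀ ≠ 0 := hD d₀ (Finset.mem_insert_self _ _)
    set v : Fin n → ℝ := d₀ with hv
    have hvd₀ : (∑ i, v i * d₀ i) ≠ 0 := by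
      have : (0:ℝ) < ∑ i, d₀ i * d₀ i := by
        apply Finset.sum_pos'
        · intro i _; exact mul_self_nonneg _
        · have : ∃ i, d₀ i ≠ 0 := by
            by_contra hc
            push_neg at hc
            exact hd₀0 (funext hc)
          obtain ⟨i, hi⟩ := this
          exact ⟨i, Finset.mem_univ _, mul_self_pos.2 hi⟩
      simpa [hv] using this.ne'
    set B : Finset ℝ :=
      (insert d₀ D).image (fun d => -(∑ i, u i * d i) / (∑ i, v i * d i)) with hB
    obtain ⟨t, ht⟩ := Infinite.exists_notMem_finset B
    refine ⟨fun i => u i + t * v i, fun d hd => ?_⟩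
    have hsum : (∑ i, (u i + t * v i) * d i)
        = (∑ i, u i * d i) + t * (∑ i, v i * d i) := by
      rw [Finset.mul_sum, ← Finset.sum_add_distrib]
      refine Finset.sum_congr rfl fun i _ => by ring
    rw [hsum]
    by_cases hvd : (∑ i, v i * d i) = 0
    · have hdD : d ∈ D := by
        rcases Finset.mem_insert.1 hd with rfl | hdD
        · exact absurd hvd hvd₀
        · exact hdD
      simpa [hvd] using hu d hdD
    · intro hzero
      apply ht
      rw [hB]
      refine Finset.mem_image.2 ⟨d, hd, ?_⟩
      field_simp
      linarith [hzero]

lemma exists_sep (F : Finset (Cplx n)) :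
    ∃ u : Fin n → ℝ, Set.InjOn (fun y : Cplx n => ∑ i, u i * y i) (↑F : Set (Cplx n)) := by
  classical
  set D : Finset (Cplx n) :=
    ((F ×ˢ F).filter (fun p => p.1 ≠ p.2)).image (fun p => p.1 - p.2) with hD
  have hDne : ∀ d ∈ D, d ≠ 0 := by
    intro d hd
    rcases Finset.mem_image.1 hd with ⟨p, hp, rfl⟩
    have := (Finset.mem_filter.1 hp).2
    exact sub_ne_zero.2 this
  obtain ⟨u, hu⟩ := exists_sep_aux D hDne
  refine ⟨u, fun y hy z hz hyz => ?_⟩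
  by_contra hne
  have hmem : y - z ∈ D := by
    refine Finset.mem_image.2 ⟨(y, z), Finset.mem_filter.2 ⟨Finset.mem_product.2 ⟨hy, hz⟩, hne⟩, rfl⟩
  apply hu _ hmem
  have : (∑ i, u i * (y - z) i) = (∑ i, u i * y i) - (∑ i, u i * z i) := by
    rw [← Finset.sum_sub_distrib]
    refine Finset.sum_congr rfl fun i _ => by
      simp [Pi.sub_apply]; ring
  rw [this]
  have hyz' : (∑ i, u i * y i) = (∑ i, u i * z i) := hyz
  rw [hyz', sub_self]

/-- Linear independence of exponentials with distinct rates, via Vandermonde. -/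
lemma exp_indep {α : Type*} (F : Finset α) (a c : α → ℝ) (hinj : Set.InjOn a ↑F)
    (h : ∀ t : ℝ, ∑ y ∈ F, Real.exp (a y * t) * c y = 0) : ∀ y ∈ F, c y = 0 := by
  classical
  set m := F.card with hm
  set g : Fin m ≃ {x // x ∈ F} := F.equivFin.symm with hg
  set v : Fin m → ℝ := fun i => Real.exp (a ((g i) : α)) with hv
  have hvinj : Function.Injective v := by
    intro i j hij
    have : a ((g i) : α) = a ((g j) : α) := Real.exp_injective hij
    have : ((g i) : α) = ((g j) : α) := hinj (g i).2 (g j).2 this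
    exact g.injective (Subtype.ext this)
  set M : Matrix (Fin m) (Fin m) ℝ := fun k i => v i ^ (k : ℕ) with hM
  have hMdet : M.det ≠ 0 := by
    have : M = (Matrix.vandermonde v).transpose := by
      ext k i; simp [hM, Matrix.vandermonde]
    rw [this, Matrix.det_transpose, Matrix.det_vandermonde]
    refine Finset.prod_ne_zero_iff.2 fun i _ => Finset.prod_ne_zero_iff.2 fun j hj => ?_
    exact sub_ne_zero.2 fun hc => (Finset.mem_Ioi.1 hj).ne' (hvinj hc)
  set c' : Fin m → ℝ := fun i => c ((g i) : α) with hc'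
  have hmv : M.mulVec c' = 0 := by
    funext k
    have hsum : ∑ y ∈ F, Real.exp (a y * (k : ℕ)) * c y = 0 := h (k : ℕ)
    have heq2 : ∑ i : Fin m, v i ^ ((k : Fin m) : ℕ) * c' i
        = ∑ y ∈ F, Real.exp (a y * ((k : Fin m) : ℕ)) * c y := by
      rw [← Finset.sum_coe_sort F (fun y => Real.exp (a y * ((k : Fin m) : ℕ)) * c y),
        ← Equiv.sum_comp g
          (fun y : {x // x ∈ F} => Real.exp (a (y : α) * ((k : Fin m) : ℕ)) * c (y : α))]
      refine Finset.sum_congr rfl fun i _ => ?_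
      simp only [hv, hc']
      congr 1
      rw [← Real.exp_nat_mul, mul_comm]
    rw [← heq2] at hsum
    simpa [Matrix.mulVec, dotProduct, hM] using hsum
  have hc0 : c' = 0 := by
    have h1 : M⁻¹ * M = 1 := Matrix.nonsing_inv_mul M (isUnit_iff_ne_zero.2 hMdet)
    have : M⁻¹.mulVec (M.mulVec c') = c' := by
      rw [Matrix.mulVec_mulVec, h1, Matrix.one_mulVec]
    rw [hmv] at this
    simpa [Matrix.mulVec_zero] using this.symm
  intro y hy
  have : y = ((g (g.symm ⟨y, hy⟩)) : α) := by simp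
  rw [this]
  exact congrFun hc0 _

lemma monomial_exp (u : Fin n → ℝ) (t : ℝ) (y : Cplx n) :
    monomial (fun i => Real.exp (u i * t)) y = Real.exp ((∑ i, u i * y i) * t) := by
  rw [monomial, Finset.sum_mul, Real.exp_sum]
  refine Finset.prod_congr rfl fun i _ => ?_
  rw [Real.rpow_def_of_pos (Real.exp_pos _), Real.log_exp]
  ring_nf

/-- Realizations determine the net reaction vectors. -/
lemma netVector_eq_of_realization {M N : ReactionNetwork n} {k κ : Cplx n × Cplx n → ℝ}
    (hre : IsRealizationOf M k N κ) : ∀ y, M.netVector k y = N.netVector κ y := by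
  classical
  set F := M.sources ∪ N.sources with hF
  have key : ∀ y ∈ F, M.netVector k y - N.netVector κ y = 0 := by
    intro y hy
    funext j
    obtain ⟨u, hu⟩ := exists_sep F
    have hz : ∀ t : ℝ, ∑ z ∈ F,
        Real.exp ((∑ i, u i * z i) * t) * ((M.netVector k z - N.netVector κ z) j) = 0 := by
      intro t
      set x : Cplx n := fun i => Real.exp (u i * t) with hx
      have hxpos : ∀ i, 0 < x i := fun i => Real.exp_pos _
      have heq : M.massAction k x = N.massAction κ x := hre x hxpos
      rw [massAction_eq_sum k x (Finset.subset_union_left),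
        massAction_eq_sum κ x (Finset.subset_union_right)] at heq
      have := sub_eq_zero.2 heq
      rw [← Finset.sum_sub_distrib] at this
      have hj := congrFun this j
      simp only [Finset.sum_apply, Pi.zero_apply] at hj
      rw [← hj]
      refine Finset.sum_congr rfl fun z _ => ?_
      simp only [Pi.sub_apply, Pi.smul_apply, smul_eq_mul, hx, monomial_exp]
      ring
    have := exp_indep F (fun z => ∑ i, u i * z i)
      (fun z => (M.netVector k z - N.netVector κ z) j) hu hz y hy
    simpa [Pi.sub_apply] using this
  intro y
  by_cases hy : y ∈ F
  · have := key y hy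
    exact sub_eq_zero.1 this
  · rw [netVector_eq_zero (fun hc => hy (Finset.mem_union_left _ hc)),
      netVector_eq_zero (fun hc => hy (Finset.mem_union_right _ hc))]

end ReactionNetwork
end Aux2
section Aux3
namespace ReactionNetwork
variable {n : ℕ}

attribute [local instance] Classical.propDecidable

open Module

/-- The set of linkage classes, as a finset of finsets. -/
noncomputable def classesF (N : ReactionNetwork n) : Finset (Finset (Cplx n)) :=
  N.complexes.image N.classF

lemma classF_mem_classesF {N : ReactionNetwork n} {y : Cplx n} (hy : y ∈ N.complexes) :
    N.classF y ∈ N.classesF := Finset.mem_image_of_mem _ hy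

lemma classesF_nonempty {N : ReactionNetwork n} {C : Finset (Cplx n)} (hC : C ∈ N.classesF) :
    C.Nonempty := by
  rcases Finset.mem_image.1 hC with ⟨y, hy, rfl⟩
  exact ⟨y, self_mem_classF hy⟩

lemma classF_eq_of_mem_classesF {N : ReactionNetwork n} {C : Finset (Cplx n)}
    (hC : C ∈ N.classesF) {z : Cplx n} (hz : z ∈ C) : N.classF z = C := by
  rcases Finset.mem_image.1 hC with ⟨y, hy, rfl⟩
  exact classF_eq_of_mem hz

lemma classesF_disj {N : ReactionNetwork n} {C C' : Finset (Cplx n)} (hC : C ∈ N.classesF)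
    (hC' : C' ∈ N.classesF) (hne : C ≠ C') : Disjoint C C' := by
  rw [Finset.disjoint_left]
  intro z hz hz'
  exact hne ((classF_eq_of_mem_classesF hC hz).symm.trans (classF_eq_of_mem_classesF hC' hz'))

lemma complexes_eq_biUnion (N : ReactionNetwork n) :
    N.complexes = N.classesF.biUnion id := by
  ext z
  constructor
  · intro hz
    exact Finset.mem_biUnion.2 ⟨N.classF z, classF_mem_classesF hz, self_mem_classF hz⟩
  · intro hz
    rcases Finset.mem_biUnion.1 hz with ⟨C, hC, hzC⟩
    rcases Finset.mem_image.1 hC with ⟨y, _, rfl⟩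
    exact (classF_subset N y) hzC

lemma card_complexes_eq_sum (N : ReactionNetwork n) :
    N.complexes.card = ∑ C ∈ N.classesF, C.card := by
  rw [complexes_eq_biUnion]
  exact Finset.card_biUnion fun C hC C' hC' hne => classesF_disj hC hC' hne

lemma numLinkageClasses_eq (N : ReactionNetwork n) :
    N.numLinkageClasses = N.classesF.card := by
  have himg : N.linkagePartition = (fun C : Finset (Cplx n) => (↑C : Set (Cplx n))) '' ↑N.classesF := by
    ext A
    constructor
    · rintro ⟨y, hy, rfl⟩
      exact ⟨N.classF y, by simpa [classesF] using classF_mem_classesF hy, coe_classF N y⟩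
    · rintro ⟨C, hC, rfl⟩
      have hC' : C ∈ N.classesF := by simpa using hC
      rcases Finset.mem_image.1 hC' with ⟨y, hy, rfl⟩
      exact ⟨y, hy, coe_classF N y⟩
  rw [numLinkageClasses, himg,
    Set.ncard_image_of_injective _ Finset.coe_injective, Set.ncard_coe_finset]

/-- Base point of a class. -/
noncomputable def bp (C : Finset (Cplx n)) : Cplx n :=
  if h : C.Nonempty then h.choose else 0

lemma bp_mem {C : Finset (Cplx n)} (h : C.Nonempty) : bp C ∈ C := by
  rw [bp, dif_pos h]; exact h.choose_spec

/-- The span of the differences of the elements of a class. -/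
noncomputable def Dsub (C : Finset (Cplx n)) : Submodule ℝ (Cplx n) :=
  Submodule.span ℝ ↑((C.erase (bp C)).image (fun z => z - bp C))

lemma sub_bp_mem_Dsub {C : Finset (Cplx n)} {z : Cplx n} (hz : z ∈ C) :
    z - bp C ∈ Dsub C := by
  by_cases hzb : z = bp C
  · rw [hzb, sub_self]; exact Submodule.zero_mem _
  · exact Submodule.subset_span (Finset.mem_coe.2
      (Finset.mem_image_of_mem _ (Finset.mem_erase.2 ⟨hzb, hz⟩)))

lemma diff_mem_Dsub {C : Finset (Cplx n)} {y z : Cplx n} (hy : y ∈ C) (hz : z ∈ C) :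
    z - y ∈ Dsub C := by
  have : z - y = (z - bp C) - (y - bp C) := by ring
  rw [this]
  exact Submodule.sub_mem _ (sub_bp_mem_Dsub hz) (sub_bp_mem_Dsub hy)

lemma finrank_Dsub_le {C : Finset (Cplx n)} (h : C.Nonempty) :
    finrank ℝ ↥(Dsub C) ≤ C.card - 1 := by
  calc finrank ℝ ↥(Dsub C) ≤ ((C.erase (bp C)).image (fun z => z - bp C)).card :=
        finrank_span_finset_le_card _
    _ ≤ (C.erase (bp C)).card := Finset.card_image_le
    _ = C.card - 1 := Finset.card_erase_of_mem (bp_mem h)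

lemma stoich_le_sup (N : ReactionNetwork n) :
    N.stoichSubspace ≤ N.classesF.sup Dsub := by
  rw [stoichSubspace, Submodule.span_le]
  rintro d ⟨r, hr, rfl⟩
  have h1 : r.1 ∈ N.classF r.1 := self_mem_classF (fst_mem_complexes hr)
  have h2 : r.2 ∈ N.classF r.1 := target_mem_classF hr h1
  exact Finset.le_sup (f := Dsub) (classF_mem_classesF (fst_mem_complexes hr))
    (diff_mem_Dsub h1 h2)

lemma finrank_finset_sup_le_sum {ι : Type*} (s : Finset ι) (T : ι → Submodule ℝ (Cplx n)) :
    finrank ℝ ↥(s.sup T) ≤ ∑ i ∈ s, finrank ℝ (T i) := by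
  classical
  induction s using Finset.induction with
  | empty => simp [finrank_bot]
  | @insert a s ha ih =>
    rw [Finset.sup_insert, Finset.sum_insert ha]
    have h := Submodule.finrank_sup_add_finrank_inf_eq (T a) (s.sup T)
    omega

lemma directness_of_finrank {ι : Type*} (s : Finset ι) (T : ι → Submodule ℝ (Cplx n))
    (heq : finrank ℝ ↥(s.sup T) = ∑ i ∈ s, finrank ℝ (T i)) :
    ∀ g : ι → Cplx n, (∀ i ∈ s, g i ∈ T i) → (∑ i ∈ s, g i = 0) → ∀ i ∈ s, g i = 0 := by
  classical
  induction s using Finset.induction with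
  | empty => intro g _ _ i hi; exact absurd hi (Finset.notMem_empty i)
  | @insert a s ha ih =>
    intro g hg hsum i hi
    rw [Finset.sup_insert, Finset.sum_insert ha] at heq
    have hle1 : finrank ℝ ↥(s.sup T) ≤ ∑ i ∈ s, finrank ℝ (T i) :=
      finrank_finset_sup_le_sum s T
    have h := Submodule.finrank_sup_add_finrank_inf_eq (T a) (s.sup T)
    have hinf : finrank ℝ ↥((T a) ⊓ (s.sup T)) = 0 := by omega
    have hsup : finrank ℝ ↥(s.sup T) = ∑ i ∈ s, finrank ℝ (T i) := by omega
    have hbot : (T a) ⊓ (s.sup T) = ⊥ := Submodule.finrank_eq_zero.1 hinf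
    have hga : g a ∈ T a := hg a (Finset.mem_insert_self _ _)
    have hsummem : ∑ i ∈ s, g i ∈ s.sup T :=
      Submodule.sum_mem _ fun i hi' => (Finset.le_sup (f := T) hi') (hg i (Finset.mem_insert_of_mem hi'))
    rw [Finset.sum_insert ha] at hsum
    have hga0 : g a = 0 := by
      have h1 : g a ∈ (T a) ⊓ (s.sup T) := by
        refine Submodule.mem_inf.2 ⟨hga, ?_⟩
        have : g a = -∑ i ∈ s, g i := eq_neg_of_add_eq_zero_left hsum
        rw [this]
        exact Submodule.neg_mem _ hsummem
      rw [hbot] at h1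
      simpa using h1
    rcases Finset.mem_insert.1 hi with rfl | his
    · exact hga0
    · refine ih hsup g (fun i hi' => hg i (Finset.mem_insert_of_mem hi')) ?_ i his
      rw [hga0, zero_add] at hsum
      exact hsum

/-- Affine independence of a finite set of points, in coefficient form. -/
def AffInd (C : Finset (Cplx n)) : Prop :=
  ∀ c : Cplx n → ℝ, (∑ v ∈ C, c v = 0) → (∑ v ∈ C, c v • v = 0) → ∀ v ∈ C, c v = 0

lemma affInd_of_finrank {C : Finset (Cplx n)} (hne : C.Nonempty)
    (hrk : finrank ℝ ↥(Dsub C) = C.card - 1) : AffInd C := by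
  intro c h0 h1
  have hb : bp C ∈ C := bp_mem hne
  have key : ∀ v ∈ C.erase (bp C), c v = 0 := by
    intro v₀ hv₀
    by_contra hcv₀
    -- `v₀ - bp C` lies in the span of the other generators
    have hsum : ∑ v ∈ C.erase (bp C), c v • (v - bp C) = 0 := by
      have : ∑ v ∈ C, c v • (v - bp C) = 0 := by
        have : ∑ v ∈ C, c v • (v - bp C)
            = (∑ v ∈ C, c v • v) - (∑ v ∈ C, c v) • bp C := by
          rw [Finset.sum_smul, ← Finset.sum_sub_distrib]
          exact Finset.sum_congr rfl fun v _ => smul_sub _ _ _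
        rw [this, h0, h1, zero_smul, sub_zero]
      rw [← Finset.add_sum_erase _ _ hb, sub_self, smul_zero, zero_add] at this
      exact this
    set G' : Finset (Cplx n) := ((C.erase (bp C)).erase v₀).image (fun z => z - bp C) with hG'
    have hv₀mem : v₀ - bp C ∈ Submodule.span ℝ (↑G' : Set (Cplx n)) := by
      have : c v₀ • (v₀ - bp C) = -∑ v ∈ (C.erase (bp C)).erase v₀, c v • (v - bp C) := by
        rw [← Finset.add_sum_erase _ _ hv₀] at hsum
        exact eq_neg_of_add_eq_zero_left hsum
      have h2 : v₀ - bp C = (-(c v₀))⁻¹ • ∑ v ∈ (C.erase (bp C)).erase v₀, c v • (v - bp C) := by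
        rw [eq_inv_smul_iff₀ (neg_ne_zero.2 hcv₀), neg_smul, this, neg_neg]
      rw [h2]
      refine Submodule.smul_mem _ _ (Submodule.sum_mem _ fun v hv => ?_)
      exact Submodule.smul_mem _ _ (Submodule.subset_span (Finset.mem_coe.2
        (Finset.mem_image_of_mem _ hv)))
    have hDle : Dsub C ≤ Submodule.span ℝ (↑G' : Set (Cplx n)) := by
      rw [Dsub, Submodule.span_le]
      intro d hd
      rcases Finset.mem_coe.1 (by exact_mod_cast hd) with h
      rcases Finset.mem_image.1 h with ⟨z, hz, rfl⟩
      by_cases hzv : z = v₀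
      · rw [hzv]; exact hv₀mem
      · exact Submodule.subset_span (Finset.mem_coe.2 (Finset.mem_image_of_mem _
          (Finset.mem_erase.2 ⟨hzv, hz⟩)))
    have hrk2 : finrank ℝ ↥(Dsub C) ≤ C.card - 2 := by
      calc finrank ℝ ↥(Dsub C) ≤ finrank ℝ ↥(Submodule.span ℝ (↑G' : Set (Cplx n))) :=
            Submodule.finrank_mono hDle
        _ ≤ G'.card := finrank_span_finset_le_card _
        _ ≤ ((C.erase (bp C)).erase v₀).card := Finset.card_image_le
        _ = C.card - 1 - 1 := by
            rw [Finset.card_erase_of_mem hv₀, Finset.card_erase_of_mem hb]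
        _ = C.card - 2 := by omega
    have hcge : 2 ≤ C.card := by
      have h1 : 1 ≤ (C.erase (bp C)).card := Finset.card_pos.2 ⟨v₀, hv₀⟩
      have h2 := Finset.card_erase_of_mem hb
      omega
    omega
  intro v hv
  by_cases hvb : v = bp C
  · rw [← Finset.add_sum_erase _ _ hb] at h0
    have : ∑ v ∈ C.erase (bp C), c v = 0 :=
      Finset.sum_eq_zero fun v hv => key v hv
    rw [this, add_zero] at h0
    rw [hvb]; exact h0
  · exact key v (Finset.mem_erase.2 ⟨hvb, hv⟩)

/-- The two structural consequences of deficiency zero. -/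
lemma dz_structure {N : ReactionNetwork n} (hdz : N.DeficiencyZero) :
    (∀ C ∈ N.classesF, AffInd C) ∧
    (∀ g : Finset (Cplx n) → Cplx n, (∀ C ∈ N.classesF, g C ∈ Dsub C) →
      (∑ C ∈ N.classesF, g C = 0) → ∀ C ∈ N.classesF, g C = 0) := by
  have hcard := N.card_complexes_eq_sum
  have hnum := N.numLinkageClasses_eq
  have hone : ∀ C ∈ N.classesF, (C.card - 1) + 1 = C.card := fun C hC =>
    Nat.succ_pred_eq_of_pos (Finset.card_pos.2 (classesF_nonempty hC))
  have hsumsplit : ∑ C ∈ N.classesF, (C.card - 1) + N.classesF.card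
      = ∑ C ∈ N.classesF, C.card := by
    rw [Finset.card_eq_sum_ones N.classesF, ← Finset.sum_add_distrib]
    exact Finset.sum_congr rfl hone
  have hA : finrank ℝ ↥N.stoichSubspace ≤ finrank ℝ ↥(N.classesF.sup Dsub) :=
    Submodule.finrank_mono (stoich_le_sup N)
  have hB : finrank ℝ ↥(N.classesF.sup Dsub) ≤ ∑ C ∈ N.classesF, finrank ℝ ↥(Dsub C) :=
    finrank_finset_sup_le_sum _ _
  have hCle : ∀ C ∈ N.classesF, finrank ℝ ↥(Dsub C) ≤ C.card - 1 := fun C hC =>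
    finrank_Dsub_le (classesF_nonempty hC)
  have hCsum : ∑ C ∈ N.classesF, finrank ℝ ↥(Dsub C) ≤ ∑ C ∈ N.classesF, (C.card - 1) :=
    Finset.sum_le_sum hCle
  rw [DeficiencyZero, hnum, hcard] at hdz
  have hBC : ∑ C ∈ N.classesF, finrank ℝ ↥(Dsub C) = ∑ C ∈ N.classesF, (C.card - 1) := by
    omega
  have hAB : finrank ℝ ↥(N.classesF.sup Dsub) = ∑ C ∈ N.classesF, finrank ℝ ↥(Dsub C) := by
    omega
  have hterm := (Finset.sum_eq_sum_iff_of_le hCle).1 hBC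
  constructor
  · intro C hC'
    exact affInd_of_finrank (classesF_nonempty hC') (hterm C hC')
  · exact directness_of_finrank _ _ hAB

end ReactionNetwork
end Aux3
section Aux4
namespace ReactionNetwork
variable {n : ℕ}

attribute [local instance] Classical.propDecidable

open Module

variable {M : ReactionNetwork n} {k : Cplx n × Cplx n → ℝ}

lemma mem_class_of_source {C : Finset (Cplx n)} (hC : C ∈ M.classesF)
    {r : Cplx n × Cplx n} (hr : r ∈ M.reactions) (h1 : r.1 ∈ C) : r.2 ∈ C := by
  rw [← classF_eq_of_mem_classesF hC h1] at *
  exact target_mem_classF hr (self_mem_classF (fst_mem_complexes hr))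

lemma mem_class_of_target {C : Finset (Cplx n)} (hC : C ∈ M.classesF)
    {r : Cplx n × Cplx n} (hr : r ∈ M.reactions) (h2 : r.2 ∈ C) : r.1 ∈ C := by
  rw [← classF_eq_of_mem_classesF hC h2] at *
  exact source_mem_classF hr (self_mem_classF (snd_mem_complexes hr))

lemma reactionsFrom_eq_filter {C : Finset (Cplx n)} {v : Cplx n} (hv : v ∈ C) :
    M.reactionsFrom v = (M.reactions.filter (fun r => r.1 ∈ C)).filter (fun r => r.1 = v) := by
  ext r
  simp only [reactionsFrom, Finset.mem_filter]
  constructor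
  · rintro ⟨h1, h2⟩; exact ⟨⟨h1, h2 ▸ hv⟩, h2⟩
  · rintro ⟨⟨h1, _⟩, h2⟩; exact ⟨h1, h2⟩

lemma sum_class_sources {C : Finset (Cplx n)} {β : Type*} [AddCommMonoid β]
    (F : Cplx n × Cplx n → β) :
    ∑ v ∈ C, ∑ r ∈ M.reactionsFrom v, F r
      = ∑ r ∈ M.reactions.filter (fun r => r.1 ∈ C), F r := by
  rw [← Finset.sum_fiberwise_of_maps_to
    (fun (r : Cplx n × Cplx n) hr => (Finset.mem_filter.1 hr).2) F]
  exact Finset.sum_congr rfl fun v hv => by rw [reactionsFrom_eq_filter hv]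

lemma filter_target_eq {C : Finset (Cplx n)} (hC : C ∈ M.classesF) {v : Cplx n} (hv : v ∈ C) :
    (M.reactions.filter (fun r => r.1 ∈ C)).filter (fun r => r.2 = v)
      = M.reactions.filter (fun r => r.2 = v) := by
  ext r
  simp only [Finset.mem_filter]
  constructor
  · rintro ⟨⟨h1, _⟩, h2⟩; exact ⟨h1, h2⟩
  · rintro ⟨h1, h2⟩
    exact ⟨⟨h1, mem_class_of_target hC h1 (h2 ▸ hv)⟩, h2⟩

lemma sum_class_targets {C : Finset (Cplx n)} (hC : C ∈ M.classesF) {β : Type*}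
    [AddCommMonoid β] (F : Cplx n × Cplx n → β) :
    ∑ r ∈ M.reactions.filter (fun r => r.1 ∈ C), F r
      = ∑ v ∈ C, ∑ r ∈ M.reactions.filter (fun r => r.2 = v), F r := by
  rw [← Finset.sum_fiberwise_of_maps_to
    (fun (r : Cplx n × Cplx n) hr =>
      mem_class_of_source hC (Finset.mem_filter.1 hr).1 (Finset.mem_filter.1 hr).2) F]
  refine Finset.sum_congr rfl fun v hv => ?_
  rw [filter_target_eq hC hv]

/-- The total outgoing rate of a complex. -/
noncomputable def outrate (M : ReactionNetwork n) (k : Cplx n × Cplx n → ℝ) (v : Cplx n) : ℝ :=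
  ∑ r ∈ M.reactionsFrom v, k r

/-- The incoming flow at a complex, weighted by `β` at the sources. -/
noncomputable def inflow (M : ReactionNetwork n) (k : Cplx n × Cplx n → ℝ)
    (β : Cplx n → ℝ) (v : Cplx n) : ℝ :=
  ∑ r ∈ M.reactions.filter (fun r => r.2 = v), k r * β r.1

/-- `β` satisfies the (left-kernel) balance equations on `C`. -/
def Balanced (M : ReactionNetwork n) (k : Cplx n × Cplx n → ℝ) (β : Cplx n → ℝ)
    (C : Finset (Cplx n)) : Prop :=
  ∀ v ∈ C, inflow M k β v = β v * outrate M k v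

lemma netVector_mem_Dsub {C : Finset (Cplx n)} (hC : C ∈ M.classesF) {y : Cplx n}
    (hy : y ∈ C) : M.netVector k y ∈ Dsub C := by
  refine Submodule.sum_mem _ fun r hr => Submodule.smul_mem _ _ ?_
  rcases Finset.mem_filter.1 hr with ⟨hr1, hr2⟩
  exact diff_mem_Dsub (hr2 ▸ hy) (mem_class_of_source hC hr1 (hr2 ▸ hy))

/-- Key identity: a weighted sum of net vectors over a class, rewritten pointwise. -/
lemma sum_smul_netVector_eq {C : Finset (Cplx n)} (hC : C ∈ M.classesF) (β : Cplx n → ℝ) :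
    ∑ y ∈ C, β y • M.netVector k y
      = ∑ v ∈ C, (inflow M k β v - β v * outrate M k v) • v := by
  have step1 : ∑ y ∈ C, β y • M.netVector k y
      = ∑ r ∈ M.reactions.filter (fun r => r.1 ∈ C), (k r * β r.1) • (r.2 - r.1) := by
    rw [← sum_class_sources (M := M) (C := C) (fun r => (k r * β r.1) • (r.2 - r.1))]
    refine Finset.sum_congr rfl fun y hy => ?_
    rw [netVector, Finset.smul_sum]
    refine Finset.sum_congr rfl fun r hr => ?_
    rw [smul_smul, (Finset.mem_filter.1 hr).2, mul_comm]
  have step2 : ∑ r ∈ M.reactions.filter (fun r => r.1 ∈ C), (k r * β r.1) • (r.2 - r.1)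
      = (∑ r ∈ M.reactions.filter (fun r => r.1 ∈ C), (k r * β r.1) • r.2)
        - (∑ r ∈ M.reactions.filter (fun r => r.1 ∈ C), (k r * β r.1) • r.1) := by
    rw [← Finset.sum_sub_distrib]
    exact Finset.sum_congr rfl fun r _ => smul_sub _ _ _
  have step3 : ∑ r ∈ M.reactions.filter (fun r => r.1 ∈ C), (k r * β r.1) • r.2
      = ∑ v ∈ C, inflow M k β v • v := by
    rw [sum_class_targets hC (fun r => (k r * β r.1) • r.2)]
    refine Finset.sum_congr rfl fun v hv => ?_
    rw [inflow, Finset.sum_smul]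
    refine Finset.sum_congr rfl fun r hr => ?_
    rw [(Finset.mem_filter.1 hr).2]
  have step4 : ∑ r ∈ M.reactions.filter (fun r => r.1 ∈ C), (k r * β r.1) • r.1
      = ∑ v ∈ C, (β v * outrate M k v) • v := by
    rw [← sum_class_sources (M := M) (C := C) (fun r => (k r * β r.1) • r.1)]
    refine Finset.sum_congr rfl fun v hv => ?_
    rw [outrate, Finset.mul_sum, Finset.sum_smul]
    refine Finset.sum_congr rfl fun r hr => ?_
    rw [(Finset.mem_filter.1 hr).2]
    ring_nf
  rw [step1, step2, step3, step4, ← Finset.sum_sub_distrib]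
  refine Finset.sum_congr rfl fun v _ => ?_
  rw [sub_smul]

lemma sum_balance_coeffs {C : Finset (Cplx n)} (hC : C ∈ M.classesF) (β : Cplx n → ℝ) :
    ∑ v ∈ C, (inflow M k β v - β v * outrate M k v) = 0 := by
  rw [Finset.sum_sub_distrib]
  have h1 : ∑ v ∈ C, inflow M k β v
      = ∑ r ∈ M.reactions.filter (fun r => r.1 ∈ C), k r * β r.1 := by
    rw [sum_class_targets hC (fun r => k r * β r.1)]
    exact Finset.sum_congr rfl fun v _ => rfl
  have h2 : ∑ v ∈ C, β v * outrate M k v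
      = ∑ r ∈ M.reactions.filter (fun r => r.1 ∈ C), k r * β r.1 := by
    rw [← sum_class_sources (M := M) (C := C) (fun r => k r * β r.1)]
    refine Finset.sum_congr rfl fun v hv => ?_
    rw [outrate, Finset.mul_sum]
    refine Finset.sum_congr rfl fun r hr => ?_
    rw [(Finset.mem_filter.1 hr).2]
    ring
  rw [h1, h2, sub_self]

/-- From a vanishing weighted sum of net vectors on an affinely independent class, deduce
the balance equations. -/
lemma balanced_of_sum_eq_zero {C : Finset (Cplx n)} (hC : C ∈ M.classesF) (haff : AffInd C)
    (β : Cplx n → ℝ) (hsum : ∑ y ∈ C, β y • M.netVector k y = 0) :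
    Balanced M k β C := by
  intro v hv
  have h1 : ∑ v ∈ C, (inflow M k β v - β v * outrate M k v) • v = 0 := by
    rw [← sum_smul_netVector_eq hC β]; exact hsum
  have := haff _ (sum_balance_coeffs hC β) h1 v hv
  linarith [this]

/-- Net vectors of complexes of a weakly reversible deficiency zero network are nonzero. -/
lemma netVector_ne_zero_of_mem (hwr : M.WeaklyReversible) (hk : M.PosRates k)
    {C : Finset (Cplx n)} (hC : C ∈ M.classesF) (haff : AffInd C) {y : Cplx n} (hy : y ∈ C) :
    M.netVector k y ≠ 0 := by
  intro hzero
  have hyc : y ∈ M.complexes := classF_subset _ _ ((classF_eq_of_mem_classesF hC hy) ▸ hy)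
  obtain ⟨r₀, hr₀, hr₀1⟩ := exists_reaction_from hwr hyc
  set c : Cplx n → ℝ := fun v =>
    (∑ r ∈ (M.reactionsFrom y).filter (fun r => r.2 = v), k r)
      - (if v = y then outrate M k y else 0) with hc
  have htmem : ∀ r ∈ M.reactionsFrom y, r.2 ∈ C := fun r hr =>
    mem_class_of_source hC (Finset.mem_filter.1 hr).1 (((Finset.mem_filter.1 hr).2).symm ▸ hy)
  have hc0 : ∑ v ∈ C, c v = 0 := by
    rw [hc]
    rw [Finset.sum_sub_distrib]
    rw [Finset.sum_fiberwise_of_maps_to htmem (fun r => k r)]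
    rw [Finset.sum_ite_eq' C y (fun _ => outrate M k y), if_pos hy, outrate, sub_self]
  have hc1 : ∑ v ∈ C, c v • v = 0 := by
    rw [hc]
    have : ∀ v ∈ C, ((∑ r ∈ (M.reactionsFrom y).filter (fun r => r.2 = v), k r)
        - (if v = y then outrate M k y else 0)) • v
        = (∑ r ∈ (M.reactionsFrom y).filter (fun r => r.2 = v), k r • r.2)
          - (if v = y then (outrate M k y) • y else 0) := by
      intro v hv
      rw [sub_smul, Finset.sum_smul]
      congr 1
      · exact Finset.sum_congr rfl fun r hr => by rw [(Finset.mem_filter.1 hr).2]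
      · by_cases hvy : v = y
        · rw [if_pos hvy, if_pos hvy, hvy]
        · rw [if_neg hvy, if_neg hvy, zero_smul]
    rw [Finset.sum_congr rfl this, Finset.sum_sub_distrib]
    rw [Finset.sum_fiberwise_of_maps_to htmem (fun r => k r • r.2)]
    rw [Finset.sum_ite_eq' C y (fun _ => (outrate M k y) • y), if_pos hy]
    have : ∑ r ∈ M.reactionsFrom y, k r • r.2 - (outrate M k y) • y
        = ∑ r ∈ M.reactionsFrom y, k r • (r.2 - r.1) := by
      rw [outrate, Finset.sum_smul, ← Finset.sum_sub_distrib]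
      refine Finset.sum_congr rfl fun r hr => ?_
      rw [smul_sub, (Finset.mem_filter.1 hr).2]
    rw [this, ← netVector, hzero]
  have hall := haff c hc0 hc1
  have hv₀ : r₀.2 ∈ C := htmem r₀ (Finset.mem_filter.2 ⟨hr₀, hr₀1⟩)
  have hv₀y : r₀.2 ≠ y := fun hcontra => (M.no_loops r₀ hr₀) (hr₀1.trans hcontra.symm)
  have hpos : 0 < ∑ r ∈ (M.reactionsFrom y).filter (fun r => r.2 = r₀.2), k r := by
    refine Finset.sum_pos (fun r hr => hk r (Finset.mem_filter.1 (Finset.mem_filter.1 hr).1).1)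
      ⟨r₀, Finset.mem_filter.2 ⟨Finset.mem_filter.2 ⟨hr₀, hr₀1⟩, rfl⟩⟩
  have := hall r₀.2 hv₀
  rw [hc] at this
  simp only [if_neg hv₀y, sub_zero] at this
  exact hpos.ne' this

end ReactionNetwork
end Aux4
section Aux5
namespace ReactionNetwork
variable {n : ℕ}

attribute [local instance] Classical.propDecidable

variable {M : ReactionNetwork n} {k : Cplx n × Cplx n → ℝ}

/-- The (transposed) Laplacian operator of the class `C`. -/
noncomputable def lap (M : ReactionNetwork n) (k : Cplx n × Cplx n → ℝ) (C : Finset (Cplx n)) :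
    (Cplx n → ℝ) →ₗ[ℝ] (Cplx n → ℝ) where
  toFun x := fun v => if v ∈ C then ∑ r ∈ M.reactionsFrom v, k r * (x r.2 - x v) else 0
  map_add' x y := by
    funext v
    by_cases h : v ∈ C
    · simp only [h, if_true, Pi.add_apply]
      rw [← Finset.sum_add_distrib]
      exact Finset.sum_congr rfl fun r _ => by ring
    · simp [h]
  map_smul' c x := by
    funext v
    by_cases h : v ∈ C
    · simp only [h, if_true, Pi.smul_apply, RingHom.id_apply, smul_eq_mul, Finset.mul_sum]
      exact Finset.sum_congr rfl fun r _ => by ring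
    · simp [h]

lemma lap_apply (C : Finset (Cplx n)) (x : Cplx n → ℝ) (v : Cplx n) :
    lap M k C x v = if v ∈ C then ∑ r ∈ M.reactionsFrom v, k r * (x r.2 - x v) else 0 := rfl

/-- Maximum principle: if `lap x ≥ 0` on a strongly connected class, then `lap x = 0`. -/
lemma lap_eq_zero_of_nonneg (hwr : M.WeaklyReversible) (hk : M.PosRates k)
    {y₀ : Cplx n} (hy₀ : y₀ ∈ M.complexes) (x : Cplx n → ℝ)
    (hpos : ∀ v, 0 ≤ lap M k (M.classF y₀) x v) : lap M k (M.classF y₀) x = 0 := by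
  set C := M.classF y₀ with hCdef
  have hC : C ∈ M.classesF := classF_mem_classesF hy₀
  have hCne : C.Nonempty := ⟨y₀, self_mem_classF hy₀⟩
  obtain ⟨vm, hvm, hvmax⟩ := Finset.exists_max_image C x hCne
  -- propagation of the maximum along directed edges
  have hstep : ∀ b c : Cplx n, b ∈ C → x b = x vm → (b, c) ∈ M.reactions →
      c ∈ C ∧ x c = x vm := by
    intro b c hbC hbx hbc
    have hcC : c ∈ C := mem_class_of_source hC hbc hbC
    have hb := hpos b
    rw [lap_apply, if_pos hbC] at hb
    have hterms : ∀ r ∈ M.reactionsFrom b, k r * (x r.2 - x b) ≤ 0 := by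
      intro r hr
      rcases Finset.mem_filter.1 hr with ⟨hr1, hr2⟩
      have hr2C : r.2 ∈ C := mem_class_of_source hC hr1 (hr2 ▸ hbC)
      have : x r.2 ≤ x b := by rw [hbx]; exact hvmax _ hr2C
      exact mul_nonpos_of_nonneg_of_nonpos (le_of_lt (hk r hr1)) (by linarith)
    have hsum0 : ∑ r ∈ M.reactionsFrom b, k r * (x r.2 - x b) = 0 :=
      le_antisymm (Finset.sum_nonpos hterms) hb
    have hall := (Finset.sum_eq_zero_iff_of_nonpos hterms).1 hsum0
    have hmem : ((b, c) : Cplx n × Cplx n) ∈ M.reactionsFrom b :=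
      Finset.mem_filter.2 ⟨hbc, rfl⟩
    have := hall _ hmem
    have hk' : (0:ℝ) < k (b, c) := hk _ hbc
    have : x c - x b = 0 := by
      rcases mul_eq_zero.1 this with h | h
      · exact absurd h hk'.ne'
      · exact h
    constructor
    · exact hcC
    · have : x c = x b := by linarith
      rw [this, hbx]
  have hreach : ∀ u : Cplx n,
      Relation.ReflTransGen (fun a b => (a, b) ∈ M.reactions) vm u →
        u ∈ C ∧ x u = x vm := by
    intro u hpath
    induction hpath with
    | refl => exact ⟨hvm, rfl⟩
    | tail hab step ih => exact hstep _ _ ih.1 ih.2 step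
  have hconst : ∀ u ∈ C, x u = x vm := by
    intro u huC
    have hlink : M.linked vm u :=
      linked_trans (linked_symm (Finset.mem_filter.1 hvm).2) (Finset.mem_filter.1 huC).2
    exact (hreach u (dirPath_of_linked hwr hlink)).2
  funext v
  rw [lap_apply]
  by_cases hv : v ∈ C
  · rw [if_pos hv]
    show _ = (0 : ℝ)
    refine Finset.sum_eq_zero fun r hr => ?_
    rcases Finset.mem_filter.1 hr with ⟨hr1, hr2⟩
    have hr2C : r.2 ∈ C := mem_class_of_source hC hr1 (hr2 ▸ hv)
    rw [hconst _ hr2C, hconst _ hv, sub_self, mul_zero]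
  · rw [if_neg hv]; rfl

/-- Stiemke-type lemma: existence of a strictly positive balanced vector on each class. -/
lemma exists_pos_balanced (hwr : M.WeaklyReversible) (hk : M.PosRates k)
    {y₀ : Cplx n} (hy₀ : y₀ ∈ M.complexes) :
    ∃ lam : Cplx n → ℝ, (∀ z ∈ M.classF y₀, 0 < lam z) ∧ (∀ z, z ∉ M.classF y₀ → lam z = 0) ∧
      Balanced M k lam (M.classF y₀) := by
  set C := M.classF y₀ with hCdef
  have hC : C ∈ M.classesF := classF_mem_classesF hy₀
  have hCne : C.Nonempty := ⟨y₀, self_mem_classF hy₀⟩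
  set A := lap M k C with hA
  set W : Submodule ℝ (Cplx n → ℝ) :=
    Submodule.span ℝ ((fun u => Pi.single u (1:ℝ)) '' ↑C) with hW
  haveI : Module.Finite ℝ W :=
    Module.Finite.span_of_finite ℝ ((Finset.finite_toSet C).image _)
  set U : Submodule ℝ (Cplx n → ℝ) := W.map A with hU
  haveI : Module.Finite ℝ U := Module.Finite.map W A
  have hUclosed : IsClosed (U : Set (Cplx n → ℝ)) := U.closed_of_finiteDimensional
  set Δ : Set (Cplx n → ℝ) :=
    {v | (∀ z, 0 ≤ v z) ∧ (∀ z, z ∉ C → v z = 0) ∧ ∑ z ∈ C, v z = 1} with hΔ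
  have hΔconv : Convex ℝ Δ := by
    rintro a ⟨ha1, ha2, ha3⟩ b ⟨hb1, hb2, hb3⟩ s t hs ht hst
    refine ⟨fun z => ?_, fun z hz => ?_, ?_⟩
    · simp only [Pi.add_apply, Pi.smul_apply, smul_eq_mul]
      exact add_nonneg (mul_nonneg hs (ha1 z)) (mul_nonneg ht (hb1 z))
    · simp only [Pi.add_apply, Pi.smul_apply, smul_eq_mul, ha2 z hz, hb2 z hz,
        mul_zero, add_zero]
    · simp only [Pi.add_apply, Pi.smul_apply, smul_eq_mul]
      rw [Finset.sum_add_distrib, ← Finset.mul_sum, ← Finset.mul_sum, ha3, hb3]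
      simpa using hst
  have hΔsub : Δ ⊆ Set.pi Set.univ (fun _ => Set.Icc (0:ℝ) 1) := by
    rintro v ⟨h1, h2, h3⟩ z _
    refine ⟨h1 z, ?_⟩
    by_cases hz : z ∈ C
    · calc v z ≤ ∑ w ∈ C, v w := Finset.single_le_sum (fun w _ => h1 w) hz
        _ = 1 := h3
    · rw [h2 z hz]; exact zero_le_one
  have hΔclosed : IsClosed Δ := by
    have e1 : IsClosed {v : Cplx n → ℝ | ∀ z, 0 ≤ v z} := by
      have : {v : Cplx n → ℝ | ∀ z, 0 ≤ v z} = ⋂ z, {v | 0 ≤ v z} := by ext v; simp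
      rw [this]
      exact isClosed_iInter fun z => isClosed_le continuous_const (continuous_apply z)
    have e2 : IsClosed {v : Cplx n → ℝ | ∀ z, z ∉ C → v z = 0} := by
      have : {v : Cplx n → ℝ | ∀ z, z ∉ C → v z = 0}
          = ⋂ (z) (_ : z ∉ C), {v | v z = 0} := by
        ext v; simp
      rw [this]
      exact isClosed_iInter fun z => isClosed_iInter fun _ =>
        isClosed_eq (continuous_apply z) continuous_const
    have e3 : IsClosed {v : Cplx n → ℝ | ∑ z ∈ C, v z = 1} :=
      isClosed_eq (by exact continuous_finset_sum _ fun z _ => continuous_apply z)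
        continuous_const
    have : Δ = {v : Cplx n → ℝ | ∀ z, 0 ≤ v z} ∩
        ({v | ∀ z, z ∉ C → v z = 0} ∩ {v | ∑ z ∈ C, v z = 1}) := rfl
    rw [this]
    exact e1.inter (e2.inter e3)
  have hΔcomp : IsCompact Δ :=
    IsCompact.of_isClosed_subset (isCompact_univ_pi fun _ => isCompact_Icc) hΔclosed hΔsub
  have hdisj : Disjoint Δ (U : Set (Cplx n → ℝ)) := by
    rw [Set.disjoint_left]
    rintro a ⟨ha1, ha2, ha3⟩ haU
    rcases Submodule.mem_map.1 haU with ⟨x, _, rfl⟩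
    have hz := lap_eq_zero_of_nonneg hwr hk hy₀ x (fun v => ha1 v)
    rw [← hA] at hz
    rw [hz] at ha3
    have : (0:ℝ) = 1 := by rw [← ha3]; simp
    norm_num at this
  obtain ⟨f, u, v, hfs, huv, hft⟩ :=
    geometric_hahn_banach_compact_closed hΔconv hΔcomp U.convex hUclosed hdisj
  have hfU : ∀ b ∈ U, f b = 0 := by
    intro b hb
    by_contra hfb
    have hmem : ((v - 1) / f b) • b ∈ U := U.smul_mem _ hb
    have := hft _ hmem
    rw [map_smul] at this
    rw [smul_eq_mul, div_mul_cancel₀ _ hfb] at this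
    linarith
  have hv0 : v < 0 := by
    have := hft 0 (Submodule.zero_mem U)
    rw [map_zero] at this
    linarith
  set lam : Cplx n → ℝ := fun z => if z ∈ C then -f (Pi.single z 1) else 0 with hlam
  have hsingleΔ : ∀ z ∈ C, Pi.single z (1:ℝ) ∈ Δ := by
    intro z hz
    refine ⟨fun w => ?_, fun w hw => ?_, ?_⟩
    · rw [Pi.single_apply]
      split <;> norm_num
    · rw [Pi.single_apply, if_neg]
      intro hwz; exact hw (hwz ▸ hz)
    · have : ∀ w ∈ C, (Pi.single z (1:ℝ) : Cplx n → ℝ) w = if z = w then (1:ℝ) else 0 := by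
        intro w _
        rw [Pi.single_apply]
        by_cases h : w = z
        · rw [if_pos h, if_pos h.symm]
        · rw [if_neg h, if_neg (fun hh => h hh.symm)]
      rw [Finset.sum_congr rfl this, Finset.sum_ite_eq C z (fun _ => (1:ℝ)), if_pos hz]
  have hlampos : ∀ z ∈ C, 0 < lam z := by
    intro z hz
    rw [hlam]
    simp only [if_pos hz]
    have := hfs _ (hsingleΔ z hz)
    linarith
  refine ⟨lam, hlampos, fun z hz => by rw [hlam]; simp [hz], ?_⟩
  -- now the balance equations
  intro u' hu'
  have hAδU : A (Pi.single u' 1) ∈ U :=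
    Submodule.mem_map_of_mem (Submodule.subset_span ⟨u', hu', rfl⟩)
  have hfAδ : f (A (Pi.single u' 1)) = 0 := hfU _ hAδU
  -- expand A δ_{u'} in the basis of coordinate vectors
  have hexpand : A (Pi.single u' 1)
      = ∑ w ∈ C, (A (Pi.single u' 1) w) • (Pi.single w (1:ℝ) : Cplx n → ℝ) := by
    funext z
    rw [Finset.sum_apply]
    have : ∀ w ∈ C, (A (Pi.single u' 1) w • (Pi.single w (1:ℝ) : Cplx n → ℝ)) z
        = if z = w then A (Pi.single u' 1) w else 0 := by
      intro w _
      rw [Pi.smul_apply, Pi.single_apply, smul_eq_mul]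
      split <;> simp
    rw [Finset.sum_congr rfl this, Finset.sum_ite_eq C z (fun w => A (Pi.single u' 1) w)]
    by_cases hz : z ∈ C
    · rw [if_pos hz]
    · rw [if_neg hz, lap_apply, if_neg hz]
  have hlin : ∑ w ∈ C, lam w * (A (Pi.single u' 1) w) = 0 := by
    have := hfAδ
    rw [hexpand, map_sum] at this
    have heq : ∀ w ∈ C, f ((A (Pi.single u' 1) w) • (Pi.single w (1:ℝ) : Cplx n → ℝ))
        = -(lam w * (A (Pi.single u' 1) w)) := by
      intro w hw
      rw [map_smul, smul_eq_mul, hlam]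
      simp only [if_pos hw]
      ring
    rw [Finset.sum_congr rfl heq, Finset.sum_neg_distrib] at this
    linarith [this]
  -- compute the coordinates of A δ_{u'}
  have hcoord : ∀ w ∈ C, A (Pi.single u' 1) w
      = (∑ r ∈ (M.reactionsFrom w).filter (fun r => r.2 = u'), k r)
        - (if w = u' then outrate M k w else 0) := by
    intro w hw
    rw [lap_apply, if_pos hw]
    have : ∀ r ∈ M.reactionsFrom w,
        k r * ((Pi.single u' (1:ℝ) : Cplx n → ℝ) r.2 - (Pi.single u' (1:ℝ) : Cplx n → ℝ) w)
        = (if r.2 = u' then k r else 0) - (if w = u' then k r else 0) := by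
      intro r _
      rw [Pi.single_apply, Pi.single_apply]
      by_cases h1 : r.2 = u' <;> by_cases h2 : w = u' <;> simp [h1, h2]
    rw [Finset.sum_congr rfl this, Finset.sum_sub_distrib]
    congr 1
    · rw [← Finset.sum_filter]
    · by_cases h2 : w = u'
      · simp only [if_pos h2]
        rw [outrate]
      · simp only [if_neg h2]
        exact Finset.sum_const_zero
  -- put everything together
  have hsplit : ∑ w ∈ C, lam w * (A (Pi.single u' 1) w)
      = inflow M k lam u' - lam u' * outrate M k u' := by
    rw [Finset.sum_congr rfl (fun w hw => by rw [hcoord w hw])]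
    have : ∀ w ∈ C, lam w * ((∑ r ∈ (M.reactionsFrom w).filter (fun r => r.2 = u'), k r)
        - (if w = u' then outrate M k w else 0))
        = (∑ r ∈ (M.reactionsFrom w).filter (fun r => r.2 = u'), k r * lam r.1)
          - (if w = u' then lam w * outrate M k w else 0) := by
      intro w _
      rw [mul_sub, Finset.mul_sum]
      congr 1
      · refine Finset.sum_congr rfl fun r hr => ?_
        have : r.1 = w := (Finset.mem_filter.1 (Finset.mem_filter.1 hr).1).2
        rw [this]; ring
      · split <;> simp
    rw [Finset.sum_congr rfl this, Finset.sum_sub_distrib]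
    congr 1
    · -- regroup the double sum as the inflow at u'
      have hfib : ∀ w ∈ C, (M.reactionsFrom w).filter (fun r => r.2 = u')
          = (M.reactions.filter (fun r => r.2 = u')).filter (fun r => r.1 = w) := by
        intro w _
        ext r
        simp only [reactionsFrom, Finset.mem_filter]
        tauto
      rw [Finset.sum_congr rfl (fun w hw => by rw [hfib w hw])]
      rw [Finset.sum_fiberwise_of_maps_to (fun r hr =>
        mem_class_of_target hC (Finset.mem_filter.1 hr).1
          (show r.2 ∈ C by rw [(Finset.mem_filter.1 hr).2]; exact hu')) (fun r => k r * lam r.1)]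
      rfl
    · rw [Finset.sum_ite_eq' C u' (fun w => lam w * outrate M k w), if_pos hu']
  rw [hsplit] at hlin
  linarith [hlin]

end ReactionNetwork
end Aux5
section Aux6
namespace ReactionNetwork
variable {n : ℕ}

attribute [local instance] Classical.propDecidable

variable {M : ReactionNetwork n} {k : Cplx n × Cplx n → ℝ}

lemma sources_subset_complexes (M : ReactionNetwork n) : M.sources ⊆ M.complexes :=
  Finset.subset_union_left

lemma balanced_sub {C : Finset (Cplx n)} {β γ : Cplx n → ℝ} (t : ℝ)
    (hβ : Balanced M k β C) (hγ : Balanced M k γ C) :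
    Balanced M k (fun v => β v - t * γ v) C := by
  intro v hv
  have h1 := hβ v hv
  have h2 := hγ v hv
  rw [inflow] at *
  have : ∑ r ∈ M.reactions.filter (fun r => r.2 = v), k r * (β r.1 - t * γ r.1)
      = (∑ r ∈ M.reactions.filter (fun r => r.2 = v), k r * β r.1)
        - t * ∑ r ∈ M.reactions.filter (fun r => r.2 = v), k r * γ r.1 := by
    rw [Finset.mul_sum, ← Finset.sum_sub_distrib]
    exact Finset.sum_congr rfl fun r _ => by ring
  rw [this, h1, h2]
  ring

lemma balanced_zero_of_nonneg (hwr : M.WeaklyReversible) (hk : M.PosRates k)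
    {y₀ : Cplx n} (hy₀ : y₀ ∈ M.complexes) {γ : Cplx n → ℝ}
    (hpos : ∀ v ∈ M.classF y₀, 0 ≤ γ v) (hbal : Balanced M k γ (M.classF y₀))
    {z₀ : Cplx n} (hz₀ : z₀ ∈ M.classF y₀) (h0 : γ z₀ = 0) :
    ∀ u ∈ M.classF y₀, γ u = 0 := by
  set C := M.classF y₀ with hCdef
  have hC : C ∈ M.classesF := classF_mem_classesF hy₀
  have hstep : ∀ a c : Cplx n, (a, c) ∈ M.reactions → a ∈ C → c ∈ C → γ c = 0 → γ a = 0 := by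
    intro a c hac haC hcC hc0
    have hb := hbal c hcC
    rw [hc0, zero_mul] at hb
    have hterms : ∀ r ∈ M.reactions.filter (fun r => r.2 = c), 0 ≤ k r * γ r.1 := by
      intro r hr
      rcases Finset.mem_filter.1 hr with ⟨hr1, hr2⟩
      have hr1C : r.1 ∈ C := mem_class_of_target hC hr1 (by rw [hr2]; exact hcC)
      exact mul_nonneg (le_of_lt (hk r hr1)) (hpos _ hr1C)
    have hall := (Finset.sum_eq_zero_iff_of_nonneg hterms).1 hb
    have hmem : ((a, c) : Cplx n × Cplx n) ∈ M.reactions.filter (fun r => r.2 = c) :=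
      Finset.mem_filter.2 ⟨hac, rfl⟩
    have := hall _ hmem
    rcases mul_eq_zero.1 this with h | h
    · exact absurd h (hk _ hac).ne'
    · exact h
  intro u huC
  have hlink : M.linked u z₀ :=
    linked_trans (linked_symm (Finset.mem_filter.1 huC).2) (Finset.mem_filter.1 hz₀).2
  have hpath := dirPath_of_linked hwr hlink
  refine Relation.ReflTransGen.head_induction_on
    (motive := fun a (_ : Relation.ReflTransGen (fun u v => (u, v) ∈ M.reactions) a z₀) =>
      a ∈ C → γ a = 0) hpath (fun _ => h0) ?_ huC
  intro a c hac hcz ih haC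
  have hcC : c ∈ C := mem_class_of_source hC hac haC
  exact hstep a c hac haC hcC (ih hcC)

/-- On a class, a balanced vector vanishing at one point vanishes everywhere. -/
lemma balanced_eq_zero_of_eq_zero (hwr : M.WeaklyReversible) (hk : M.PosRates k)
    {y₀ : Cplx n} (hy₀ : y₀ ∈ M.complexes) {β : Cplx n → ℝ}
    (hbal : Balanced M k β (M.classF y₀)) {z y : Cplx n} (hz : z ∈ M.classF y₀)
    (hβz : β z = 0) (hy : y ∈ M.classF y₀) : β y = 0 := by
  set C := M.classF y₀ with hCdef
  obtain ⟨lam, hlampos, hlam0, hlambal⟩ := exists_pos_balanced hwr hk hy₀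
  obtain ⟨vm, hvm, hmin⟩ :=
    Finset.exists_min_image C (fun v => β v / lam v) ⟨y₀, self_mem_classF hy₀⟩
  set t := β vm / lam vm with ht
  set γ : Cplx n → ℝ := fun v => β v - t * lam v with hγ
  have hγbal : Balanced M k γ C := balanced_sub t hbal hlambal
  have hγpos : ∀ v ∈ C, 0 ≤ γ v := by
    intro v hv
    have h1 : t ≤ β v / lam v := hmin v hv
    have h2 : 0 < lam v := hlampos v hv
    rw [hγ]
    have := (le_div_iff₀ h2).1 h1
    simp only []
    linarith
  have hγvm : γ vm = 0 := by
    rw [hγ, ht]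
    simp only []
    rw [div_mul_cancel₀ _ (hlampos vm hvm).ne']
    ring
  have hγall := balanced_zero_of_nonneg hwr hk hy₀ hγpos hγbal hvm hγvm
  have hβprop : ∀ v ∈ C, β v = t * lam v := by
    intro v hv
    have := hγall v hv
    rw [hγ] at this
    simp only [] at this
    linarith
  have ht0 : t = 0 := by
    have := hβprop z hz
    rw [hβz] at this
    rcases mul_eq_zero.1 this.symm with h | h
    · exact h
    · exact absurd h (hlampos z hz).ne'
  have := hβprop y hy
  rw [ht0, zero_mul] at this
  exact this

/-- Support lemma: a vector in the kernel of the net-vector map of a WR₀ network is,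
on each linkage class, either everywhere nonzero or identically zero. -/
lemma kernel_support (hwr : M.WeaklyReversible) (hdz : M.DeficiencyZero) (hk : M.PosRates k)
    (β : Cplx n → ℝ) (hker : ∑ y ∈ M.complexes, β y • M.netVector k y = 0)
    {y z : Cplx n} (hy : y ∈ M.complexes) (hz : z ∈ M.classF y) (hβz : β z = 0) :
    β y = 0 := by
  obtain ⟨haff, hdir⟩ := dz_structure hdz
  have hdisjp : (↑M.classesF : Set (Finset (Cplx n))).PairwiseDisjoint id := by
    intro C hC C' hC' hne
    exact classesF_disj (by simpa using hC) (by simpa using hC') hne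
  have hsplit : ∑ C ∈ M.classesF, ∑ u ∈ C, β u • M.netVector k u = 0 := by
    rw [← hker, complexes_eq_biUnion, Finset.sum_biUnion hdisjp]
    rfl
  have hperclass := hdir (fun C => ∑ u ∈ C, β u • M.netVector k u)
    (fun C hC => Submodule.sum_mem _ fun u hu =>
      Submodule.smul_mem _ _ (netVector_mem_Dsub hC hu))
    hsplit
  have hCy : M.classF y ∈ M.classesF := classF_mem_classesF hy
  have hzero := hperclass _ hCy
  have hbal := balanced_of_sum_eq_zero hCy (haff _ hCy) β hzero
  exact balanced_eq_zero_of_eq_zero hwr hk hy hbal hz hβz (self_mem_classF hy)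

/-- In a WR₀ network every complex has a nonzero net vector. -/
lemma netVector_ne_zero (hwr : M.WeaklyReversible) (hdz : M.DeficiencyZero)
    (hk : M.PosRates k) {y : Cplx n} (hy : y ∈ M.complexes) : M.netVector k y ≠ 0 :=
  netVector_ne_zero_of_mem hwr hk (classF_mem_classesF hy)
    ((dz_structure hdz).1 _ (classF_mem_classesF hy)) (self_mem_classF hy)

lemma netVector_eq_zero_of_not_complex {y : Cplx n} (hy : y ∉ M.complexes) :
    M.netVector k y = 0 :=
  netVector_eq_zero fun hc => hy (sources_subset_complexes M hc)

end ReactionNetwork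
end Aux6
section Aux7
namespace ReactionNetwork
variable {n : ℕ}

attribute [local instance] Classical.propDecidable

lemma netVector_congr {N : ReactionNetwork n} {κ κ' : Cplx n × Cplx n → ℝ} (y : Cplx n)
    (h : ∀ r ∈ N.reactionsFrom y, κ r = κ' r) : N.netVector κ y = N.netVector κ' y :=
  Finset.sum_congr rfl fun r hr => by rw [h r hr]

lemma mem_complexes_transfer {M M' : ReactionNetwork n} {k k' : Cplx n × Cplx n → ℝ}
    (hM : M.WR0) (hk : M.PosRates k) {z : Cplx n}
    (hoff : ∀ y, y ≠ z → M.netVector k y = M'.netVector k' y)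
    {v : Cplx n} (hv : v ∈ M.complexes) (hvz : v ≠ z) : v ∈ M'.complexes := by
  by_contra hvc
  have h0 : M'.netVector k' v = 0 := netVector_eq_zero_of_not_complex hvc
  exact netVector_ne_zero hM.1 hM.2 hk hv ((hoff v hvz).trans h0)

/-- Claim (†): a linkage class of `M` avoiding `z` absorbs the `M'`-classes of its members. -/
lemma class_closed {M M' : ReactionNetwork n} {k k' : Cplx n × Cplx n → ℝ}
    (hM : M.WR0) (hk : M.PosRates k) (hM' : M'.WR0) (hk' : M'.PosRates k')
    {z : Cplx n} (hoff : ∀ y, y ≠ z → M.netVector k y = M'.netVector k' y)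
    {y : Cplx n} (hy : y ∈ M.complexes) (hzC : z ∉ M.classF y) :
    ∀ u ∈ M.classF y, ∀ v ∈ M'.classF u, v ∈ M.classF y := by
  set C := M.classF y with hCdef
  have hC : C ∈ M.classesF := classF_mem_classesF hy
  have hCsub : ∀ v ∈ C, v ∈ M'.complexes ∧ M'.netVector k' v = M.netVector k v := by
    intro v hv
    have hvz : v ≠ z := fun hc => hzC (hc ▸ hv)
    refine ⟨mem_complexes_transfer hM hk hoff (classF_subset _ _ hv) hvz, (hoff v hvz).symm⟩
  obtain ⟨lam, hlampos, hlam0, hlambal⟩ := exists_pos_balanced hM.1 hk hy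
  have hker : ∑ u ∈ M'.complexes, lam u • M'.netVector k' u = 0 := by
    rw [← Finset.sum_subset (fun v hv => (hCsub v hv).1)
      (fun x _ hx => by rw [hlam0 x hx, zero_smul])]
    have h1 : ∑ u ∈ C, lam u • M'.netVector k' u = ∑ u ∈ C, lam u • M.netVector k u :=
      Finset.sum_congr rfl fun u hu => by rw [(hCsub u hu).2]
    rw [h1, sum_smul_netVector_eq hC lam]
    refine Finset.sum_eq_zero fun v hv => ?_
    rw [hlambal v hv, sub_self, zero_smul]
  intro u hu v hv
  by_contra hvC
  have h0 : lam v = 0 := hlam0 v hvC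
  have := kernel_support hM'.1 hM'.2 hk' lam hker (hCsub u hu).1 hv h0
  exact (hlampos u hu).ne' this

/-- One half of the single-site comparison of linkage partitions. -/
lemma linkagePartition_subset_of_nets {M M' : ReactionNetwork n} {k k' : Cplx n × Cplx n → ℝ}
    (hM : M.WR0) (hk : M.PosRates k) (hM' : M'.WR0) (hk' : M'.PosRates k')
    {z : Cplx n} (hoff : ∀ y, y ≠ z → M.netVector k y = M'.netVector k' y) :
    M.linkagePartition ⊆ M'.linkagePartition := by
  have hoff' : ∀ y, y ≠ z → M'.netVector k' y = M.netVector k y :=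
    fun y hy => (hoff y hy).symm
  rintro A ⟨y, hy, rfl⟩
  by_cases hzC : z ∉ M.classF y
  · -- the class of `y` avoids `z`
    have hyz : y ≠ z := fun hc => hzC (hc ▸ self_mem_classF hy)
    have hy' : y ∈ M'.complexes := mem_complexes_transfer hM hk hoff hy hyz
    have hcl := class_closed hM hk hM' hk' hoff hy hzC
    have hBsub : M'.classF y ⊆ M.classF y := fun v hv => hcl y (self_mem_classF hy) v hv
    have hzB : z ∉ M'.classF y := fun hc => hzC (hBsub hc)
    have hcl' := class_closed hM' hk' hM hk hoff' hy' hzB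
    have hCsub : M.classF y ⊆ M'.classF y := fun v hv => hcl' y (self_mem_classF hy') v hv
    have heq : M.classF y = M'.classF y := Finset.Subset.antisymm hCsub hBsub
    exact ⟨y, hy', by rw [← coe_classF, ← coe_classF, heq]⟩
  · push_neg at hzC
    have hzM : z ∈ M.complexes := classF_subset _ _ hzC
    have hCz : M.classF z = M.classF y := classF_eq_of_mem hzC
    by_cases hz' : z ∈ M'.complexes
    · -- `z` is a complex of both: the class of `z` matches
      have heq : M.classF y = M'.classF z := by
        apply Finset.Subset.antisymm
        · -- ⊆
          intro u hu
          by_cases huz : u = z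
          · rw [huz]; exact self_mem_classF hz'
          · have huM : u ∈ M.complexes := classF_subset _ _ hu
            have hu' : u ∈ M'.complexes := mem_complexes_transfer hM hk hoff huM huz
            by_contra huB
            have hzB : z ∉ M'.classF u := by
              intro hzB
              have : M'.classF z = M'.classF u := classF_eq_of_mem hzB
              exact huB (this ▸ self_mem_classF hu')
            have hcl' := class_closed hM' hk' hM hk hoff' hu' hzB
            have : z ∈ M'.classF u := by
              refine hcl' u (self_mem_classF hu') z ?_
              rw [classF_eq_of_mem hu]
              exact hzC
            exact hzB this
        · -- ⊇
          intro v hv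
          by_contra hvC
          have hvz : v ≠ z := fun hc => hvC (hc ▸ hzC)
          have hv' : v ∈ M'.complexes := classF_subset _ _ hv
          have hvM : v ∈ M.complexes := by
            by_contra hvc
            have h0 : M.netVector k v = 0 := netVector_eq_zero_of_not_complex hvc
            exact netVector_ne_zero hM'.1 hM'.2 hk' hv' ((hoff' v hvz).trans h0)
          have hzD : z ∉ M.classF v := by
            intro hzD
            have : M.classF z = M.classF v := classF_eq_of_mem hzD
            exact hvC (by rw [← hCz, this]; exact self_mem_classF hvM)
          have hcl := class_closed hM hk hM' hk' hoff hvM hzD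
          have : z ∈ M.classF v := by
            refine hcl v (self_mem_classF hvM) z ?_
            rw [classF_eq_of_mem hv]
            exact self_mem_classF hz'
          exact hzD this
      exact ⟨z, hz', by rw [← coe_classF, ← coe_classF, heq]⟩
    · -- impossible: `z` is a complex of `M` but not of `M'`
      exfalso
      obtain ⟨r, hr, hr1⟩ := exists_reaction_from hM.1 hzM
      have hu : r.2 ∈ M.classF y := target_mem_classF hr (show r.1 ∈ M.classF y by
        rw [hr1]; exact hzC)
      have huz : r.2 ≠ z := fun hc => (M.no_loops r hr) (hr1.trans hc.symm)
      have huM : r.2 ∈ M.complexes := classF_subset _ _ hu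
      have hu' : r.2 ∈ M'.complexes := mem_complexes_transfer hM hk hoff huM huz
      have hzB : z ∉ M'.classF r.2 := fun hc => hz' (classF_subset _ _ hc)
      have hcl' := class_closed hM' hk' hM hk hoff' hu' hzB
      have : z ∈ M'.classF r.2 := by
        refine hcl' r.2 (self_mem_classF hu') z ?_
        rw [classF_eq_of_mem hu]
        exact hzC
      exact hzB this

/-- The single-site comparison: two WR₀ mass-action systems whose net vectors agree away
from a single complex `z` have the same linkage-class partition. -/
lemma linkagePartition_eq_of_nets {M M' : ReactionNetwork n} {k k' : Cplx n × Cplx n → ℝ}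
    (hM : M.WR0) (hk : M.PosRates k) (hM' : M'.WR0) (hk' : M'.PosRates k')
    (z : Cplx n) (hoff : ∀ y, y ≠ z → M.netVector k y = M'.netVector k' y) :
    M.linkagePartition = M'.linkagePartition :=
  Set.Subset.antisymm
    (linkagePartition_subset_of_nets hM hk hM' hk' hoff)
    (linkagePartition_subset_of_nets hM' hk' hM hk (fun y hy => (hoff y hy).symm))

end ReactionNetwork
end Aux7

/-- If `N` is WR₀-realizable, then any two WR₀ realizations of `(N,κ₁)`
and `(N,κ₂)` (for any positive rate constants `κ₁`, `κ₂`) have the same linkage class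
partition. -/
theorem wr0_realization_same_linkage_partition {n : ℕ} (N : ReactionNetwork n)
    (h : N.WR0Realizable)
    (κ₁ κ₂ : Cplx n × Cplx n → ℝ) (hκ₁ : N.PosRates κ₁) (hκ₂ : N.PosRates κ₂)
    (N₁ N₂ : ReactionNetwork n) (k₁ k₂ : Cplx n × Cplx n → ℝ)
    (hN₁ : N₁.WR0) (hk₁ : N₁.PosRates k₁)
    (hreal₁ : ReactionNetwork.IsRealizationOf N₁ k₁ N κ₁)
    (hN₂ : N₂.WR0) (hk₂ : N₂.PosRates k₂)
    (hreal₂ : ReactionNetwork.IsRealizationOf N₂ k₂ N κ₂) :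
    N₁.linkagePartition = N₂.linkagePartition := by
  classical
  have hnet₁ : ∀ y, N₁.netVector k₁ y = N.netVector κ₁ y :=
    ReactionNetwork.netVector_eq_of_realization hreal₁
  have hnet₂ : ∀ y, N₂.netVector k₂ y = N.netVector κ₂ y :=
    ReactionNetwork.netVector_eq_of_realization hreal₂
  set l : List (Cplx n × Cplx n) := N.reactions.toList with hl
  set c : ℕ → (Cplx n × Cplx n → ℝ) :=
    fun j r => if r ∈ l.take j then κ₂ r else κ₁ r with hc
  have hposc : ∀ j, N.PosRates (c j) := by
    intro j r hr
    rw [hc]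
    dsimp only
    split
    · exact hκ₂ r hr
    · exact hκ₁ r hr
  have hex : ∀ j : ℕ, ∃ M : ReactionNetwork n, ∃ km : Cplx n × Cplx n → ℝ,
      M.WR0 ∧ M.PosRates km ∧ ReactionNetwork.IsRealizationOf M km N (c j) :=
    fun j => h (c j) (hposc j)
  choose Mf kf hwr0 hposf hrealf using hex
  have hnetf : ∀ j y, (Mf j).netVector (kf j) y = N.netVector (c j) y := fun j =>
    ReactionNetwork.netVector_eq_of_realization (hrealf j)
  have hstep : ∀ j, (Mf j).linkagePartition = (Mf (j + 1)).linkagePartition := by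
    intro j
    by_cases hj : j < l.length
    · refine ReactionNetwork.linkagePartition_eq_of_nets (hwr0 j) (hposf j)
        (hwr0 (j + 1)) (hposf (j + 1)) ((l.get ⟨j, hj⟩).1) ?_
      intro y hyz
      rw [hnetf j y, hnetf (j + 1) y]
      refine ReactionNetwork.netVector_congr y fun r hr => ?_
      have hr1 : r.1 = y := (Finset.mem_filter.1 hr).2
      have hrne : r ≠ l.get ⟨j, hj⟩ := by
        intro hcontra
        exact hyz (by rw [← hr1, hcontra])
      have hmem : (r ∈ l.take (j + 1)) ↔ (r ∈ l.take j) := by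
        rw [List.take_succ, List.mem_append]
        constructor
        · rintro (hmem | hmem)
          · exact hmem
          · exfalso
            apply hrne
            have : l[j]? = some (l.get ⟨j, hj⟩) := by
              rw [List.getElem?_eq_getElem hj, List.get_eq_getElem]
            rw [this] at hmem
            simpa using hmem
        · exact fun hmem => Or.inl hmem
      rw [hc]
      dsimp only
      rw [if_congr hmem.symm rfl rfl]
    · have hcc : c j = c (j + 1) := by
        funext r
        rw [hc]
        dsimp only
        rw [List.take_of_length_le (le_of_not_gt hj),
          List.take_of_length_le ((le_of_not_gt hj).trans (Nat.le_succ j))]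
      refine ReactionNetwork.linkagePartition_eq_of_nets (hwr0 j) (hposf j)
        (hwr0 (j + 1)) (hposf (j + 1)) 0 ?_
      intro y _
      rw [hnetf j y, hnetf (j + 1) y, hcc]
  have htel : ∀ j, (Mf 0).linkagePartition = (Mf j).linkagePartition := by
    intro j
    induction j with
    | zero => rfl
    | succ j ih => rw [ih]; exact hstep j
  have hend0 : N₁.linkagePartition = (Mf 0).linkagePartition := by
    refine ReactionNetwork.linkagePartition_eq_of_nets hN₁ hk₁ (hwr0 0) (hposf 0) 0 ?_
    intro y _
    rw [hnet₁ y, hnetf 0 y]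
    refine ReactionNetwork.netVector_congr y fun r _ => ?_
    rw [hc]
    simp
  have hendm : (Mf l.length).linkagePartition = N₂.linkagePartition := by
    refine ReactionNetwork.linkagePartition_eq_of_nets (hwr0 l.length) (hposf l.length)
      hN₂ hk₂ 0 ?_
    intro y _
    rw [hnetf l.length y, hnet₂ y]
    refine ReactionNetwork.netVector_congr y fun r hr => ?_
    have hrr : r ∈ N.reactions := (Finset.mem_filter.1 hr).1
    rw [hc]
    dsimp only
    rw [if_pos (by rw [List.take_length]; exact Finset.mem_toList.2 hrr)]
  rw [hend0, htel l.length, hendm]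
end
end

section
/- Let N be a reaction network on n species with deficiency zero. Then for every linkage class of N, the complexes belonging to that linkage class are affinely independent as points of ℝ^n. -/
/-!
Basic definitions for reaction networks, following the paper
"Weakly reversible deficiency zero realizations of reaction networks".
-/

noncomputable section

open Finset

section Aux

variable {n : ℕ} (N : ReactionNetwork n)

lemma linked_symm : Symmetric N.linked :=
  fun a b hab => (@Relation.ReflTransGen.stdSymm _
    (fun u v => (u, v) ∈ N.reactions ∨ (v, u) ∈ N.reactions) ⟨fun _ _ h => h.symm⟩).symm a b hab

lemma mem_linkageClass_self {y : Cplx n} (hy : y ∈ N.complexes) :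
    y ∈ N.linkageClass y := ⟨hy, Relation.ReflTransGen.refl⟩

lemma linkageClass_eq_of_mem {y z : Cplx n} (hz : z ∈ N.linkageClass y) :
    N.linkageClass z = N.linkageClass y := by
  obtain ⟨hzc, hyz⟩ := hz
  ext u
  constructor
  · rintro ⟨huc, hzu⟩
    exact ⟨huc, hyz.trans hzu⟩
  · rintro ⟨huc, hyu⟩
    exact ⟨huc, (linked_symm N hyz).trans hyu⟩

end Aux

/-- If `N` has deficiency zero, then the complexes of any linkage
class of `N` are affinely independent as points of `ℝ^n`. -/
theorem deficiency_zero_linkage_class_affineIndependent {n : ℕ} (N : ReactionNetwork n)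
    (h : N.DeficiencyZero) (y : Cplx n) (hy : y ∈ N.complexes) :
    AffineIndependent ℝ (fun z : N.linkageClass y => (z : Cplx n)) := by
  classical
  -- a representative of each linkage class
  set rep : Set (Cplx n) → Cplx n :=
    fun C => if h : C.Nonempty then h.some else 0 with hrep
  set b : Cplx n → Cplx n := fun z => rep (N.linkageClass z) with hbdef
  have hbmem : ∀ z ∈ N.complexes, b z ∈ N.linkageClass z := by
    intro z hz
    have hne : (N.linkageClass z).Nonempty := ⟨z, mem_linkageClass_self N hz⟩
    simp only [hbdef, hrep, dif_pos hne]
    exact hne.some_mem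
  have hbeq : ∀ {z w : Cplx n}, z ∈ N.linkageClass w → b z = b w := by
    intro z w hzw
    simp only [hbdef, linkageClass_eq_of_mem N hzw]
  have hbb : ∀ z ∈ N.complexes, b (b z) = b z := by
    intro z hz
    exact hbeq (hbmem z hz)
  -- the bases and non-bases
  set B : Finset (Cplx n) := N.complexes.filter (fun z => b z = z) with hB
  set F : Finset (Cplx n) := N.complexes.filter (fun z => ¬ b z = z) with hF
  have hBF : B.card + F.card = N.complexes.card :=
    Finset.card_filter_add_card_filter_not _
  -- the number of linkage classes equals the number of bases
  have hl : N.numLinkageClasses = B.card := by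
    have h1 : N.linkagePartition =
        ↑(N.complexes.image (fun z => N.linkageClass z)) := by
      ext C
      simp only [ReactionNetwork.linkagePartition, Set.mem_setOf_eq, coe_image,
        Set.mem_image, mem_coe]
      constructor
      · rintro ⟨w, hw, rfl⟩; exact ⟨w, hw, rfl⟩
      · rintro ⟨w, hw, rfl⟩; exact ⟨w, hw, rfl⟩
    have h2 : N.complexes.image (fun z => N.linkageClass z) =
        B.image (fun z => N.linkageClass z) := by
      apply Finset.Subset.antisymm
      · intro C hC
        obtain ⟨z, hz, rfl⟩ := Finset.mem_image.1 hC
        refine Finset.mem_image.2 ⟨b z, ?_, ?_⟩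
        · exact Finset.mem_filter.2 ⟨(hbmem z hz).1, hbb z hz⟩
        · exact linkageClass_eq_of_mem N (hbmem z hz)
      · exact Finset.image_subset_image (Finset.filter_subset _ _)
    have h3 : (B.image (fun z => N.linkageClass z)).card = B.card := by
      apply Finset.card_image_of_injOn
      intro z hz w hw hzw
      obtain ⟨hzc, hzb⟩ := Finset.mem_filter.1 hz
      obtain ⟨hwc, hwb⟩ := Finset.mem_filter.1 hw
      have hzw' : N.linkageClass z = N.linkageClass w := hzw
      have : w ∈ N.linkageClass z := by
        rw [hzw']; exact mem_linkageClass_self N hwc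
      rw [← hwb, ← hzb, hbeq this]
    rw [ReactionNetwork.numLinkageClasses, h1, Set.ncard_coe_finset, h2, h3]
  -- the difference vectors of the non-base complexes
  set T : Finset (Cplx n) := F.image (fun z => z - b z) with hT
  have hTcard : T.card ≤ F.card := Finset.card_image_le
  -- each z - b z is in the span of T
  have hkey : ∀ z ∈ N.complexes, z - b z ∈ Submodule.span ℝ (↑T : Set (Cplx n)) := by
    intro z hz
    by_cases hzb : b z = z
    · rw [hzb, sub_self]; exact Submodule.zero_mem _
    · exact Submodule.subset_span (Finset.mem_coe.2 (Finset.mem_image.2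
        ⟨z, Finset.mem_filter.2 ⟨hz, hzb⟩, rfl⟩))
  -- the stoichiometric subspace is contained in the span of T
  have hspan : N.stoichSubspace ≤ Submodule.span ℝ (↑T : Set (Cplx n)) := by
    rw [ReactionNetwork.stoichSubspace, Submodule.span_le]
    rintro d ⟨r, hr, rfl⟩
    have h1 : r.1 ∈ N.complexes :=
      Finset.mem_union_left _ (Finset.mem_image_of_mem _ hr)
    have h2 : r.2 ∈ N.complexes :=
      Finset.mem_union_right _ (Finset.mem_image_of_mem _ hr)
    have hlink : r.2 ∈ N.linkageClass r.1 :=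
      ⟨h2, Relation.ReflTransGen.single (Or.inl hr)⟩
    have hbr : b r.2 = b r.1 := hbeq hlink
    have : r.2 - r.1 = (r.2 - b r.2) - (r.1 - b r.1) := by rw [hbr]; abel
    rw [SetLike.mem_coe, this]
    exact Submodule.sub_mem _ (hkey _ h2) (hkey _ h1)
  -- dimension counting
  have hFcard : F.card = Module.finrank ℝ N.stoichSubspace := by
    have := h
    rw [ReactionNetwork.DeficiencyZero] at this
    omega
  have hd1 : Module.finrank ℝ N.stoichSubspace ≤
      Module.finrank ℝ (Submodule.span ℝ (↑T : Set (Cplx n))) :=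
    Submodule.finrank_mono hspan
  have hd2 : Module.finrank ℝ (Submodule.span ℝ (↑T : Set (Cplx n))) ≤ T.card :=
    finrank_span_finset_le_card T
  have hdim : T.card = Module.finrank ℝ (Submodule.span ℝ (↑T : Set (Cplx n))) := by
    omega
  -- T is linearly independent
  have hTind : LinearIndependent ℝ ((↑) : (↑T : Set (Cplx n)) → Cplx n) := by
    rw [linearIndependent_iff_card_eq_finrank_span, Subtype.range_coe, Set.finrank]
    have hcard : Fintype.card (↑T : Set (Cplx n)) = T.card := by
      rw [← Fintype.card_coe T]
      exact Fintype.card_congr (Equiv.subtypeEquivRight (by intro x; simp))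
    rw [hcard]; exact hdim
  -- conclude affine independence of the linkage class of y
  have hbC : b y ∈ N.linkageClass y := hbmem y hy
  rw [affineIndependent_iff_linearIndependent_vsub ℝ _
    (⟨b y, hbC⟩ : N.linkageClass y)]
  have hmemT : ∀ i : {x : N.linkageClass y // x ≠ ⟨b y, hbC⟩},
      ((i : N.linkageClass y) : Cplx n) - b y ∈ (↑T : Set (Cplx n)) := by
    rintro ⟨⟨z, hz⟩, hne⟩
    have hzc : z ∈ N.complexes := hz.1
    have hbz : b z = b y := hbeq hz
    have hzne : ¬ b z = z := by
      rw [hbz]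
      intro hc
      exact hne (Subtype.ext hc.symm)
    have : z - b z ∈ T :=
      Finset.mem_image.2 ⟨z, Finset.mem_filter.2 ⟨hzc, hzne⟩, rfl⟩
    simpa [hbz] using this
  set g : {x : N.linkageClass y // x ≠ ⟨b y, hbC⟩} → (↑T : Set (Cplx n)) :=
    fun i => ⟨((i : N.linkageClass y) : Cplx n) - b y, hmemT i⟩ with hg
  have hginj : Function.Injective g := by
    rintro ⟨⟨z, hz⟩, hnz⟩ ⟨⟨w, hw⟩, hnw⟩ hgzw
    have : z - b y = w - b y := congrArg Subtype.val hgzw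
    have : z = w := by
      have := congrArg (· + b y) this
      simpa using this
    exact Subtype.ext (Subtype.ext this)
  exact hTind.comp g hginj
end
end
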